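/- arXiv:math/0203136 — 10 statements merged into one kernel-verified Lean document; each statement's English description precedes it below -/
import Mathlib

section
/- A Laurent polynomial p(t) = Σ_{k=-m}^{n} c_k t^k in t = q^γ satisfies p(q/(abcd t)) = p(t) identically if and only if p(t) can be written as a polynomial (with complex coefficients) in Λ(t) = t^{-1}(1-t)(1-abcd t/q). -/
/-!
Put `u = abcd/q`, so that the involution is `σ t = (u t)⁻¹` and
`Λ(t) = u (t + σ t) - (1 + u)`. Thus `Λ` is invariant, and conversely an invariant `p` equals
its average `½ Σ c_k (t^k + (σ t)^k)`. Since `t · σ t = u⁻¹` is constant, each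
`x^k + y^k` (`k ∈ ℤ`) with `x y = u⁻¹` is a polynomial in `x + y`: a Dickson polynomial for
`k ≥ 0`, and `u^{-k}` times one for `k < 0`.
-/

open Polynomial

theorem Polynomial.dickson_one_eval_add {R : Type*} [CommRing R] {a x y : R} (h : x * y = a) :
    ∀ n, (dickson 1 a n).eval (x + y) = x ^ n + y ^ n
  | 0 => by
    simp only [pow_zero, dickson_zero]; norm_num
  | 1 => by simp only [eval_X, dickson_one, pow_one]
  | n + 2 => by
    simp only [eval_sub, eval_mul, dickson_one_eval_add h _, eval_X, dickson_add_two, eval_C]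
    rw [← h]
    ring

section Field

variable {K : Type*} [Field K]

theorem exists_eval_add_eq_zpow_add_zpow {a : K} (ha : a ≠ 0) (k : ℤ) :
    ∃ D : K[X], ∀ x y : K, x * y = a → D.eval (x + y) = x ^ k + y ^ k := by
  obtain ⟨n, rfl | rfl⟩ := Int.eq_nat_or_neg k
  · exact ⟨dickson 1 a n, fun x y h => by simpa using dickson_one_eval_add h n⟩
  · refine ⟨C (a⁻¹ ^ n) * dickson 1 a n, fun x y h => ?_⟩
    have hx : x ≠ 0 := left_ne_zero_of_mul (h ▸ ha)
    have hy : y ≠ 0 := right_ne_zero_of_mul (h ▸ ha)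
    rw [eval_mul, eval_C, dickson_one_eval_add h, ← h, zpow_neg, zpow_neg, zpow_natCast,
      zpow_natCast, inv_pow, mul_pow]
    field_simp
    ring

theorem exists_eval_add_eq_sum_zpow_add_zpow {a : K} (ha : a ≠ 0) (s : Finset ℤ) (c : ℤ → K) :
    ∃ D : K[X], ∀ x y : K, x * y = a → D.eval (x + y) = ∑ k ∈ s, c k * (x ^ k + y ^ k) := by
  choose D hD using exists_eval_add_eq_zpow_add_zpow ha
  refine ⟨∑ k ∈ s, C (c k) * D k, fun x y h => ?_⟩
  simp only [eval_finsetSum, eval_mul, eval_C, hD _ x y h]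

def askeyWilsonLambda (u t : K) : K := t⁻¹ * (1 - t) * (1 - u * t)

theorem askeyWilsonLambda_inv_mul {u t : K} (hu : u ≠ 0) (ht : t ≠ 0) :
    askeyWilsonLambda u (u * t)⁻¹ = askeyWilsonLambda u t := by
  unfold askeyWilsonLambda
  field_simp
  ring

theorem exists_polynomial_lambda_of_invariant [NeZero (2 : K)] {u : K} (hu : u ≠ 0)
    {s : Finset ℤ} {c : ℤ → K} {p : K → K} (hp : ∀ t ≠ 0, p t = ∑ k ∈ s, c k * t ^ k)
    (hinv : ∀ t ≠ 0, p (u * t)⁻¹ = p t) :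
    ∃ P : K[X], ∀ t ≠ 0, p t = P.eval (askeyWilsonLambda u t) := by
  obtain ⟨D, hD⟩ := exists_eval_add_eq_sum_zpow_add_zpow (inv_ne_zero hu) s (fun k => 2⁻¹ * c k)
  refine ⟨D.comp (C u⁻¹ * (X + C (1 + u))), fun t ht => ?_⟩
  have hprod : t * (u * t)⁻¹ = u⁻¹ := by field_simp
  have hsum : u⁻¹ * (askeyWilsonLambda u t + (1 + u)) = t + (u * t)⁻¹ := by
    unfold askeyWilsonLambda
    field_simp
    ring
  calc p t = 2⁻¹ * (p t + p (u * t)⁻¹) := by rw [hinv t ht]; field_simp; ring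
    _ = ∑ k ∈ s, 2⁻¹ * c k * (t ^ k + (u * t)⁻¹ ^ k) := by
      rw [hp t ht, hp _ (by simp [hu, ht]), ← Finset.sum_add_distrib, Finset.mul_sum]
      exact Finset.sum_congr rfl fun k _ => by rw [inv_zpow']; ring
    _ = _ := by rw [eval_comp, eval_mul, eval_add, eval_C, eval_X, eval_C, hsum, hD _ _ hprod]

theorem invariant_iff_exists_polynomial_lambda [NeZero (2 : K)] {u : K} (hu : u ≠ 0)
    {s : Finset ℤ} {c : ℤ → K} {p : K → K} (hp : ∀ t ≠ 0, p t = ∑ k ∈ s, c k * t ^ k) :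
    (∀ t ≠ 0, p (u * t)⁻¹ = p t) ↔
      ∃ P : K[X], ∀ t ≠ 0, p t = P.eval (askeyWilsonLambda u t) := by
  refine ⟨exists_polynomial_lambda_of_invariant hu hp, fun ⟨P, hP⟩ t ht => ?_⟩
  rw [hP _ (by simp [hu, ht]), hP t ht, askeyWilsonLambda_inv_mul hu ht]

end Field

theorem laurent_invariant_iff_polynomial_in_Lambda_general
    (q : ℝ) (hq : 0 < q)
    (a b c d : ℂ) (ha : a ≠ 0) (hb : b ≠ 0) (hc : c ≠ 0) (hd : d ≠ 0)
    (m n : ℕ) (cf : ℤ → ℂ) (p : ℂ → ℂ)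
    (hp : ∀ t : ℂ, t ≠ 0 →
      p t = ∑ k ∈ Finset.Icc (-(m : ℤ)) (n : ℤ), cf k * t ^ k) :
    (∀ t : ℂ, t ≠ 0 → p ((q : ℂ) / (a * b * c * d * t)) = p t) ↔
      ∃ P : Polynomial ℂ, ∀ t : ℂ, t ≠ 0 →
        p t = P.eval (t⁻¹ * (1 - t) * (1 - a * b * c * d * t / (q : ℂ))) := by
  have hu : a * b * c * d / (q : ℂ) ≠ 0 :=
    div_ne_zero (by simp [ha, hb, hc, hd]) (Complex.ofReal_ne_zero.mpr hq.ne')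
  have hσ : ∀ t : ℂ, (q : ℂ) / (a * b * c * d * t) = (a * b * c * d / q * t)⁻¹ :=
    fun t => by rw [div_mul_eq_mul_div, inv_div]
  have hΛ : ∀ t : ℂ, a * b * c * d * t / (q : ℂ) = a * b * c * d / q * t :=
    fun t => (div_mul_eq_mul_div _ _ _).symm
  simp only [hσ, hΛ]
  exact invariant_iff_exists_polynomial_lambda hu hp

/-- A Laurent polynomial `p(t) = Σ_{k=-m}^{n} c_k t^k` satisfies
`p(q/(abcd·t)) = p(t)` identically (on `t ≠ 0`) if and only if `p` can be
written as a polynomial in `Λ(t) = t⁻¹(1-t)(1-abcd·t/q)`. -/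
theorem laurent_invariant_iff_polynomial_in_Lambda
    (q : ℝ) (hq : 0 < q) (hq1 : q < 1)
    (a b c d : ℂ) (ha : a ≠ 0) (hb : b ≠ 0) (hc : c ≠ 0) (hd : d ≠ 0)
    (m n : ℕ) (cf : ℤ → ℂ) (p : ℂ → ℂ)
    (hp : ∀ t : ℂ, t ≠ 0 →
      p t = ∑ k ∈ Finset.Icc (-(m : ℤ)) (n : ℤ), cf k * t ^ k) :
    (∀ t : ℂ, t ≠ 0 → p ((q : ℂ) / (a * b * c * d * t)) = p t) ↔
      ∃ P : Polynomial ℂ, ∀ t : ℂ, t ≠ 0 →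
        p t = P.eval (t⁻¹ * (1 - t) * (1 - a * b * c * d * t / (q : ℂ))) :=
  laurent_invariant_iff_polynomial_in_Lambda_general q hq a b c d ha hb hc hd m n cf p hp
end

section
/- Let a,b,c,d be parameters with products nonzero. Define φ_γ = 1/(q^{-γ} - abcd q^γ), B_γ = a + a^{-1} - A_γ - C_γ, and the operators P = φ_γ (E - Id), Q = (A_γ Id - C_γ E^{-1}) φ_γ^{-1}, acting on complex-valued functions of γ ∈ ℤ (with E the forward shift). Then the second-order operator L = A_γ E + B_γ Id + C_γ E^{-1} satisfies L - (a + a^{-1}) Id = Q P. -/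
/-- Lower-upper factorization of the Askey-Wilson operator:
`L - (a + a⁻¹) Id = Q P` with `P = φ_γ (E - Id)` and
`Q = (A_γ Id - C_γ E⁻¹) φ_γ⁻¹`. -/
theorem askey_wilson_QP_factorization
    (q : ℝ) (hq : 0 < q) (hq1 : q < 1)
    (a b c d : ℂ) (ha : a ≠ 0) (hb : b ≠ 0) (hc : c ≠ 0) (hd : d ≠ 0)
    (A C φ : ℤ → ℂ)
    (hA : ∀ γ : ℤ, A γ =
      (1 - a*b*(q:ℂ)^γ) * (1 - a*c*(q:ℂ)^γ) * (1 - a*d*(q:ℂ)^γ) *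
        (1 - a*b*c*d*(q:ℂ)^(γ-1)) /
      (a * (1 - a*b*c*d*(q:ℂ)^(2*γ-1)) * (1 - a*b*c*d*(q:ℂ)^(2*γ))))
    (hC : ∀ γ : ℤ, C γ =
      a * (1 - (q:ℂ)^γ) * (1 - b*c*(q:ℂ)^(γ-1)) * (1 - b*d*(q:ℂ)^(γ-1)) *
        (1 - c*d*(q:ℂ)^(γ-1)) /
      ((1 - a*b*c*d*(q:ℂ)^(2*γ-2)) * (1 - a*b*c*d*(q:ℂ)^(2*γ-1))))
    (hφ : ∀ γ : ℤ, φ γ = 1 / ((q:ℂ)^(-γ) - a*b*c*d*(q:ℂ)^γ))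
    (hφ0 : ∀ γ : ℤ, (q:ℂ)^(-γ) - a*b*c*d*(q:ℂ)^γ ≠ 0)
    (hden1 : ∀ γ : ℤ, 1 - a*b*c*d*(q:ℂ)^(2*γ-1) ≠ 0)
    (hden2 : ∀ γ : ℤ, 1 - a*b*c*d*(q:ℂ)^(2*γ) ≠ 0)
    (P Q L : (ℤ → ℂ) → (ℤ → ℂ))
    (hP : ∀ (h : ℤ → ℂ) (γ : ℤ), P h γ = φ γ * (h (γ+1) - h γ))
    (hQ : ∀ (h : ℤ → ℂ) (γ : ℤ),
      Q h γ = A γ * (φ γ)⁻¹ * h γ - C γ * (φ (γ-1))⁻¹ * h (γ-1))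
    (hL : ∀ (h : ℤ → ℂ) (γ : ℤ),
      L h γ = A γ * h (γ+1) + (a + a⁻¹ - A γ - C γ) * h γ + C γ * h (γ-1)) :
    ∀ (h : ℤ → ℂ) (γ : ℤ), L h γ - (a + a⁻¹) * h γ = Q (P h) γ := by
  intro h γ
  have hφne : ∀ δ : ℤ, φ δ ≠ 0 := fun δ => by
    rw [hφ]; exact one_div_ne_zero (hφ0 δ)
  rw [hL, hQ, hP, hP]
  have e1 : (φ γ)⁻¹ * (φ γ * (h (γ+1) - h γ)) = h (γ+1) - h γ := by
    rw [← mul_assoc, inv_mul_cancel₀ (hφne γ), one_mul]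
  have e2 : (φ (γ-1))⁻¹ * (φ (γ-1) * (h (γ-1+1) - h (γ-1))) = h (γ-1+1) - h (γ-1) := by
    rw [← mul_assoc, inv_mul_cancel₀ (hφne (γ-1)), one_mul]
  rw [mul_assoc (A γ), e1, mul_assoc (C γ), e2]
  have : γ - 1 + 1 = γ := by ring
  rw [this]; ring
end

section
/- With the same notation, define A'_γ, B'_γ, C'_γ as the Askey-Wilson coefficients with parameter a replaced by aq (and b,c,d unchanged), and L' = A'_γ E + B'_γ Id + C'_γ E^{-1}. Then L' - (a + a^{-1}) Id = P Q, where P = φ_γ (E - Id) and Q = (A_γ Id - C_γ E^{-1}) φ_γ^{-1}. Equivalently, the scalar identity a + a^{-1} - C_{γ+1} - A_γ = aq + (aq)^{-1} - A'_γ(aq) - C'_γ(aq) holds, together with (φ_γ/φ_{γ+1}) A_{γ+1} = A'_γ(aq) and (φ_γ/φ_{γ-1}) C_γ = C'_γ(aq). -/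
set_option maxHeartbeats 3200000 in
/-- Exchanging the factors: `L' - (a + a⁻¹) Id = P Q`, where `L'` is the
Askey-Wilson operator with parameter `a` replaced by `aq`; together with the
equivalent scalar identities. -/
theorem askey_wilson_PQ_factorization
    (q : ℝ) (hq : 0 < q) (hq1 : q < 1)
    (a b c d : ℂ) (ha : a ≠ 0) (hb : b ≠ 0) (hc : c ≠ 0) (hd : d ≠ 0)
    (A C A' C' φ : ℤ → ℂ)
    (hA : ∀ γ : ℤ, A γ =
      (1 - a*b*(q:ℂ)^γ) * (1 - a*c*(q:ℂ)^γ) * (1 - a*d*(q:ℂ)^γ) *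
        (1 - a*b*c*d*(q:ℂ)^(γ-1)) /
      (a * (1 - a*b*c*d*(q:ℂ)^(2*γ-1)) * (1 - a*b*c*d*(q:ℂ)^(2*γ))))
    (hC : ∀ γ : ℤ, C γ =
      a * (1 - (q:ℂ)^γ) * (1 - b*c*(q:ℂ)^(γ-1)) * (1 - b*d*(q:ℂ)^(γ-1)) *
        (1 - c*d*(q:ℂ)^(γ-1)) /
      ((1 - a*b*c*d*(q:ℂ)^(2*γ-2)) * (1 - a*b*c*d*(q:ℂ)^(2*γ-1))))
    (hA' : ∀ γ : ℤ, A' γ =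
      (1 - (a*(q:ℂ))*b*(q:ℂ)^γ) * (1 - (a*(q:ℂ))*c*(q:ℂ)^γ) *
        (1 - (a*(q:ℂ))*d*(q:ℂ)^γ) * (1 - (a*(q:ℂ))*b*c*d*(q:ℂ)^(γ-1)) /
      ((a*(q:ℂ)) * (1 - (a*(q:ℂ))*b*c*d*(q:ℂ)^(2*γ-1)) *
        (1 - (a*(q:ℂ))*b*c*d*(q:ℂ)^(2*γ))))
    (hC' : ∀ γ : ℤ, C' γ =
      (a*(q:ℂ)) * (1 - (q:ℂ)^γ) * (1 - b*c*(q:ℂ)^(γ-1)) * (1 - b*d*(q:ℂ)^(γ-1)) *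
        (1 - c*d*(q:ℂ)^(γ-1)) /
      ((1 - (a*(q:ℂ))*b*c*d*(q:ℂ)^(2*γ-2)) * (1 - (a*(q:ℂ))*b*c*d*(q:ℂ)^(2*γ-1))))
    (hφ : ∀ γ : ℤ, φ γ = 1 / ((q:ℂ)^(-γ) - a*b*c*d*(q:ℂ)^γ))
    (hφ0 : ∀ γ : ℤ, (q:ℂ)^(-γ) - a*b*c*d*(q:ℂ)^γ ≠ 0)
    (hden1 : ∀ γ : ℤ, 1 - a*b*c*d*(q:ℂ)^(2*γ-1) ≠ 0)
    (hden2 : ∀ γ : ℤ, 1 - a*b*c*d*(q:ℂ)^(2*γ) ≠ 0)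
    (hden3 : ∀ γ : ℤ, 1 - a*b*c*d*(q:ℂ)^(2*γ-2) ≠ 0)
    (P Q L' : (ℤ → ℂ) → (ℤ → ℂ))
    (hP : ∀ (h : ℤ → ℂ) (γ : ℤ), P h γ = φ γ * (h (γ+1) - h γ))
    (hQ : ∀ (h : ℤ → ℂ) (γ : ℤ),
      Q h γ = A γ * (φ γ)⁻¹ * h γ - C γ * (φ (γ-1))⁻¹ * h (γ-1))
    (hL' : ∀ (h : ℤ → ℂ) (γ : ℤ),
      L' h γ = A' γ * h (γ+1) + (a*(q:ℂ) + (a*(q:ℂ))⁻¹ - A' γ - C' γ) * h γ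
        + C' γ * h (γ-1)) :
    (∀ (h : ℤ → ℂ) (γ : ℤ), L' h γ - (a + a⁻¹) * h γ = P (Q h) γ) ∧
    (∀ γ : ℤ, a + a⁻¹ - C (γ+1) - A γ = a*(q:ℂ) + (a*(q:ℂ))⁻¹ - A' γ - C' γ) ∧
    (∀ γ : ℤ, φ γ / φ (γ+1) * A (γ+1) = A' γ) ∧
    (∀ γ : ℤ, φ γ / φ (γ-1) * C γ = C' γ) := by
  have hq0 : (q:ℂ) ≠ 0 := by
    simp only [ne_eq, Complex.ofReal_eq_zero]
    exact hq.ne'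
  have hU : ∀ γ : ℤ, (q:ℂ)^γ ≠ 0 := fun γ => zpow_ne_zero γ hq0
  have zp1 : ∀ γ : ℤ, (q:ℂ)^(γ+1) = (q:ℂ)^γ * q := fun γ => zpow_add_one₀ hq0 γ
  have zm1 : ∀ γ : ℤ, (q:ℂ)^(γ-1) = (q:ℂ)^γ * (q:ℂ)⁻¹ := fun γ => zpow_sub_one₀ hq0 γ
  have z2 : ∀ γ : ℤ, (q:ℂ)^(2*γ) = ((q:ℂ)^γ)^2 := by
    intro γ; rw [two_mul, zpow_add₀ hq0, sq]
  have z2m1 : ∀ γ : ℤ, (q:ℂ)^(2*γ-1) = ((q:ℂ)^γ)^2 * (q:ℂ)⁻¹ := by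
    intro γ; rw [zpow_sub_one₀ hq0, z2]
  have z2m2 : ∀ γ : ℤ, (q:ℂ)^(2*γ-2) = ((q:ℂ)^γ)^2 * ((q:ℂ)⁻¹)^2 := by
    intro γ
    rw [show 2*γ-2 = (γ-1)+(γ-1) by ring, zpow_add₀ hq0, zm1]
    ring
  have zq1 : ∀ γ : ℤ, (q:ℂ)^(2*γ+1) = ((q:ℂ)^γ)^2 * (q:ℂ) := by
    intro γ; rw [zpow_add_one₀ hq0, z2]
  have zq2 : ∀ γ : ℤ, (q:ℂ)^(2*γ+2) = ((q:ℂ)^γ)^2 * (q:ℂ)^2 := by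
    intro γ
    rw [show 2*γ+2 = (2*γ+1)+1 by ring, zpow_add_one₀ hq0, zq1]
    ring
  -- nonzero facts
  have k0 : ∀ γ : ℤ, 1 - a*b*c*d*((q:ℂ)^γ)^2 ≠ 0 := by
    intro γ; have h := hden2 γ; rwa [z2] at h
  have kq : ∀ γ : ℤ, 1 - a*b*c*d*(((q:ℂ)^γ)^2*(q:ℂ)⁻¹) ≠ 0 := by
    intro γ; have h := hden1 γ; rwa [z2m1] at h
  have k1 : ∀ γ : ℤ, (q:ℂ) - a*b*c*d*((q:ℂ)^γ)^2 ≠ 0 := by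
    intro γ
    have h : (q:ℂ) - a*b*c*d*((q:ℂ)^γ)^2
        = (q:ℂ) * (1 - a*b*c*d*(((q:ℂ)^γ)^2*(q:ℂ)⁻¹)) := by
      field_simp
    rw [h]
    exact mul_ne_zero hq0 (kq γ)
  have k2m : ∀ γ : ℤ, 1 - a*b*c*d*(((q:ℂ)^γ)^2*(q:ℂ)) ≠ 0 := by
    intro γ
    have h := hden1 (γ+1)
    rwa [show 2*(γ+1)-1 = 2*γ+1 by ring, zq1 γ] at h
  have k3m : ∀ γ : ℤ, 1 - a*b*c*d*(((q:ℂ)^γ)^2*(q:ℂ)^2) ≠ 0 := by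
    intro γ
    have h := hden2 (γ+1)
    rwa [show 2*(γ+1) = 2*γ+2 by ring, zq2 γ] at h
  have kqq : ∀ γ : ℤ, 1 - a*b*c*d*(((q:ℂ)^γ)^2*((q:ℂ)⁻¹)^2) ≠ 0 := by
    intro γ; have h := hden3 γ; rwa [z2m2] at h
  have k4 : ∀ γ : ℤ, (q:ℂ)^2 - a*b*c*d*((q:ℂ)^γ)^2 ≠ 0 := by
    intro γ
    have h : (q:ℂ)^2 - a*b*c*d*((q:ℂ)^γ)^2
        = (q:ℂ)^2 * (1 - a*b*c*d*(((q:ℂ)^γ)^2*((q:ℂ)⁻¹)^2)) := by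
      field_simp
    rw [h]
    exact mul_ne_zero (pow_ne_zero 2 hq0) (kqq γ)
  have hφne : ∀ γ : ℤ, φ γ ≠ 0 := by
    intro γ; rw [hφ γ]; exact one_div_ne_zero (hφ0 γ)
  have haq : a*(q:ℂ) ≠ 0 := mul_ne_zero ha hq0
  -- closed forms in terms of (q:ℂ)^γ only
  have hφu : ∀ γ : ℤ, φ γ = (q:ℂ)^γ / (1 - a*b*c*d*((q:ℂ)^γ)^2) := by
    intro γ
    have h0 := hφ0 γ
    rw [zpow_neg] at h0
    rw [hφ γ, zpow_neg, div_eq_div_iff h0 (k0 γ), one_mul, mul_sub,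
      mul_inv_cancel₀ (hU γ)]
    ring
  have hφp : ∀ γ : ℤ, φ (γ+1)
      = (q:ℂ)^γ * (q:ℂ) / (1 - a*b*c*d*(((q:ℂ)^γ)^2*(q:ℂ)^2)) := by
    intro γ
    rw [hφu (γ+1), zp1 γ, mul_pow]
  have hφm : ∀ γ : ℤ, φ (γ-1)
      = (q:ℂ)^γ * (q:ℂ) / ((q:ℂ)^2 - a*b*c*d*((q:ℂ)^γ)^2) := by
    intro γ
    have hd0 : 1 - a*b*c*d*((q:ℂ)^γ*(q:ℂ)⁻¹)^2 ≠ 0 := by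
      have h := kqq γ
      rwa [show (((q:ℂ)^γ)^2*((q:ℂ)⁻¹)^2 : ℂ) = ((q:ℂ)^γ*(q:ℂ)⁻¹)^2 by ring] at h
    rw [hφu (γ-1), zm1 γ, div_eq_div_iff hd0 (k4 γ)]
    field_simp
  have hAu : ∀ γ : ℤ, A γ =
      (1 - a*b*(q:ℂ)^γ) * (1 - a*c*(q:ℂ)^γ) * (1 - a*d*(q:ℂ)^γ) *
        ((q:ℂ) - a*b*c*d*(q:ℂ)^γ) /
      (a * ((q:ℂ) - a*b*c*d*((q:ℂ)^γ)^2) * (1 - a*b*c*d*((q:ℂ)^γ)^2)) := by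
    intro γ
    have w1 : 1 - a*b*c*d*((q:ℂ)^γ*(q:ℂ)⁻¹)
        = ((q:ℂ) - a*b*c*d*(q:ℂ)^γ)*(q:ℂ)⁻¹ := by
      rw [sub_mul, mul_inv_cancel₀ hq0]; ring
    have w2 : 1 - a*b*c*d*(((q:ℂ)^γ)^2*(q:ℂ)⁻¹)
        = ((q:ℂ) - a*b*c*d*((q:ℂ)^γ)^2)*(q:ℂ)⁻¹ := by
      rw [sub_mul, mul_inv_cancel₀ hq0]; ring
    rw [hA γ, zm1 γ, z2m1 γ, z2 γ, w1, w2,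
      div_eq_div_iff
        (mul_ne_zero (mul_ne_zero ha (mul_ne_zero (k1 γ) (inv_ne_zero hq0))) (k0 γ))
        (mul_ne_zero (mul_ne_zero ha (k1 γ)) (k0 γ))]
    ring
  have hCu : ∀ γ : ℤ, C γ =
      a * (1 - (q:ℂ)^γ) * ((q:ℂ) - b*c*(q:ℂ)^γ) * ((q:ℂ) - b*d*(q:ℂ)^γ) *
        ((q:ℂ) - c*d*(q:ℂ)^γ) /
      (((q:ℂ)^2 - a*b*c*d*((q:ℂ)^γ)^2) * ((q:ℂ) - a*b*c*d*((q:ℂ)^γ)^2)) := by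
    intro γ
    have wbc : 1 - b*c*((q:ℂ)^γ*(q:ℂ)⁻¹) = ((q:ℂ) - b*c*(q:ℂ)^γ)*(q:ℂ)⁻¹ := by
      rw [sub_mul, mul_inv_cancel₀ hq0]; ring
    have wbd : 1 - b*d*((q:ℂ)^γ*(q:ℂ)⁻¹) = ((q:ℂ) - b*d*(q:ℂ)^γ)*(q:ℂ)⁻¹ := by
      rw [sub_mul, mul_inv_cancel₀ hq0]; ring
    have wcd : 1 - c*d*((q:ℂ)^γ*(q:ℂ)⁻¹) = ((q:ℂ) - c*d*(q:ℂ)^γ)*(q:ℂ)⁻¹ := by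
      rw [sub_mul, mul_inv_cancel₀ hq0]; ring
    have w2 : 1 - a*b*c*d*(((q:ℂ)^γ)^2*(q:ℂ)⁻¹)
        = ((q:ℂ) - a*b*c*d*((q:ℂ)^γ)^2)*(q:ℂ)⁻¹ := by
      rw [sub_mul, mul_inv_cancel₀ hq0]; ring
    have w3 : 1 - a*b*c*d*(((q:ℂ)^γ)^2*((q:ℂ)⁻¹)^2)
        = ((q:ℂ)^2 - a*b*c*d*((q:ℂ)^γ)^2)*((q:ℂ)⁻¹)^2 := by
      rw [sub_mul, show ((q:ℂ))^2*((q:ℂ)⁻¹)^2 = ((q:ℂ)*(q:ℂ)⁻¹)^2 by ring,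
        mul_inv_cancel₀ hq0, one_pow]; ring
    rw [hC γ, zm1 γ, z2m1 γ, z2m2 γ, wbc, wbd, wcd, w2, w3,
      div_eq_div_iff
        (mul_ne_zero (mul_ne_zero (k4 γ) (pow_ne_zero 2 (inv_ne_zero hq0)))
          (mul_ne_zero (k1 γ) (inv_ne_zero hq0)))
        (mul_ne_zero (k4 γ) (k1 γ))]
    ring
  have hAp : ∀ γ : ℤ, A (γ+1) =
      (1 - a*b*((q:ℂ)^γ*(q:ℂ))) * (1 - a*c*((q:ℂ)^γ*(q:ℂ))) * (1 - a*d*((q:ℂ)^γ*(q:ℂ))) *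
        (1 - a*b*c*d*(q:ℂ)^γ) /
      (a * (1 - a*b*c*d*(((q:ℂ)^γ)^2*(q:ℂ))) * (1 - a*b*c*d*(((q:ℂ)^γ)^2*(q:ℂ)^2))) := by
    intro γ
    rw [hA (γ+1), zp1 γ, show γ+1-1 = γ by ring,
      show 2*(γ+1)-1 = 2*γ+1 by ring, show 2*(γ+1) = 2*γ+2 by ring, zq1 γ, zq2 γ]
  have hCp : ∀ γ : ℤ, C (γ+1) =
      a * (1 - (q:ℂ)^γ*(q:ℂ)) * (1 - b*c*(q:ℂ)^γ) * (1 - b*d*(q:ℂ)^γ) *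
        (1 - c*d*(q:ℂ)^γ) /
      ((1 - a*b*c*d*((q:ℂ)^γ)^2) * (1 - a*b*c*d*(((q:ℂ)^γ)^2*(q:ℂ)))) := by
    intro γ
    rw [hC (γ+1), zp1 γ, show γ+1-1 = γ by ring,
      show 2*(γ+1)-2 = 2*γ by ring, show 2*(γ+1)-1 = 2*γ+1 by ring, z2 γ, zq1 γ]
  have hA'u : ∀ γ : ℤ, A' γ =
      (1 - a*(q:ℂ)*b*(q:ℂ)^γ) * (1 - a*(q:ℂ)*c*(q:ℂ)^γ) * (1 - a*(q:ℂ)*d*(q:ℂ)^γ) *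
        (1 - a*b*c*d*(q:ℂ)^γ) /
      ((a*(q:ℂ)) * (1 - a*b*c*d*((q:ℂ)^γ)^2) * (1 - a*b*c*d*(((q:ℂ)^γ)^2*(q:ℂ)))) := by
    intro γ
    rw [hA' γ, zm1 γ, z2m1 γ, z2 γ,
      show a*(q:ℂ)*b*c*d*((q:ℂ)^γ*(q:ℂ)⁻¹)
        = a*b*c*d*(q:ℂ)^γ*((q:ℂ)*(q:ℂ)⁻¹) by ring,
      show a*(q:ℂ)*b*c*d*(((q:ℂ)^γ)^2*(q:ℂ)⁻¹)
        = a*b*c*d*((q:ℂ)^γ)^2*((q:ℂ)*(q:ℂ)⁻¹) by ring,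
      mul_inv_cancel₀ hq0, mul_one, mul_one,
      show a*(q:ℂ)*b*c*d*((q:ℂ)^γ)^2 = a*b*c*d*(((q:ℂ)^γ)^2*(q:ℂ)) by ring]
  have hC'u : ∀ γ : ℤ, C' γ =
      a * (1 - (q:ℂ)^γ) * ((q:ℂ) - b*c*(q:ℂ)^γ) * ((q:ℂ) - b*d*(q:ℂ)^γ) *
        ((q:ℂ) - c*d*(q:ℂ)^γ) /
      ((q:ℂ) * ((q:ℂ) - a*b*c*d*((q:ℂ)^γ)^2) * (1 - a*b*c*d*((q:ℂ)^γ)^2)) := by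
    intro γ
    have wbc : 1 - b*c*((q:ℂ)^γ*(q:ℂ)⁻¹) = ((q:ℂ) - b*c*(q:ℂ)^γ)*(q:ℂ)⁻¹ := by
      rw [sub_mul, mul_inv_cancel₀ hq0]; ring
    have wbd : 1 - b*d*((q:ℂ)^γ*(q:ℂ)⁻¹) = ((q:ℂ) - b*d*(q:ℂ)^γ)*(q:ℂ)⁻¹ := by
      rw [sub_mul, mul_inv_cancel₀ hq0]; ring
    have wcd : 1 - c*d*((q:ℂ)^γ*(q:ℂ)⁻¹) = ((q:ℂ) - c*d*(q:ℂ)^γ)*(q:ℂ)⁻¹ := by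
      rw [sub_mul, mul_inv_cancel₀ hq0]; ring
    have w2' : 1 - a*(q:ℂ)*b*c*d*(((q:ℂ)^γ)^2*(q:ℂ)⁻¹)
        = ((q:ℂ) - a*(q:ℂ)*b*c*d*((q:ℂ)^γ)^2)*(q:ℂ)⁻¹ := by
      rw [sub_mul, mul_inv_cancel₀ hq0]; ring
    have w3' : 1 - a*(q:ℂ)*b*c*d*(((q:ℂ)^γ)^2*((q:ℂ)⁻¹)^2)
        = ((q:ℂ)^2 - a*(q:ℂ)*b*c*d*((q:ℂ)^γ)^2)*((q:ℂ)⁻¹)^2 := by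
      rw [sub_mul, show ((q:ℂ))^2*((q:ℂ)⁻¹)^2 = ((q:ℂ)*(q:ℂ)⁻¹)^2 by ring,
        mul_inv_cancel₀ hq0, one_pow]; ring
    have n1 : (q:ℂ)^2 - a*(q:ℂ)*b*c*d*((q:ℂ)^γ)^2 ≠ 0 := by
      rw [show (q:ℂ)^2 - a*(q:ℂ)*b*c*d*((q:ℂ)^γ)^2
        = (q:ℂ)*((q:ℂ) - a*b*c*d*((q:ℂ)^γ)^2) by ring]
      exact mul_ne_zero hq0 (k1 γ)
    have n2 : (q:ℂ) - a*(q:ℂ)*b*c*d*((q:ℂ)^γ)^2 ≠ 0 := by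
      rw [show (q:ℂ) - a*(q:ℂ)*b*c*d*((q:ℂ)^γ)^2
        = (q:ℂ)*(1 - a*b*c*d*((q:ℂ)^γ)^2) by ring]
      exact mul_ne_zero hq0 (k0 γ)
    rw [hC' γ, zm1 γ, z2m1 γ, z2m2 γ, wbc, wbd, wcd, w2', w3',
      div_eq_div_iff
        (mul_ne_zero (mul_ne_zero n1 (pow_ne_zero 2 (inv_ne_zero hq0)))
          (mul_ne_zero n2 (inv_ne_zero hq0)))
        (mul_ne_zero (mul_ne_zero hq0 (k1 γ)) (k0 γ))]
    ring
  -- the three scalar identities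
  have key2 : ∀ γ : ℤ, a + a⁻¹ - C (γ+1) - A γ
      = a*(q:ℂ) + (a*(q:ℂ))⁻¹ - A' γ - C' γ := by
    intro γ
    rw [hCp γ, hAu γ, hA'u γ, hC'u γ]
    have e1 : a + a⁻¹ = (a^2+1)/a := by field_simp
    have e2 : a*(q:ℂ) + (a*(q:ℂ))⁻¹ = ((a*(q:ℂ))^2+1)/(a*(q:ℂ)) := by
      field_simp
    rw [e1, e2,
      div_sub_div _ _ ha (mul_ne_zero (k0 γ) (k2m γ)),
      div_sub_div _ _ (mul_ne_zero ha (mul_ne_zero (k0 γ) (k2m γ)))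
        (mul_ne_zero (mul_ne_zero ha (k1 γ)) (k0 γ)),
      div_sub_div _ _ haq (mul_ne_zero (mul_ne_zero haq (k0 γ)) (k2m γ)),
      div_sub_div _ _ (mul_ne_zero haq (mul_ne_zero (mul_ne_zero haq (k0 γ)) (k2m γ)))
        (mul_ne_zero (mul_ne_zero hq0 (k1 γ)) (k0 γ))]
    rw [div_eq_div_iff
      (mul_ne_zero (mul_ne_zero ha (mul_ne_zero (k0 γ) (k2m γ)))
        (mul_ne_zero (mul_ne_zero ha (k1 γ)) (k0 γ)))
      (mul_ne_zero (mul_ne_zero haq (mul_ne_zero (mul_ne_zero haq (k0 γ)) (k2m γ)))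
        (mul_ne_zero (mul_ne_zero hq0 (k1 γ)) (k0 γ)))]
    ring
  have key3 : ∀ γ : ℤ, φ γ / φ (γ+1) * A (γ+1) = A' γ := by
    intro γ
    rw [hφu γ, hφp γ, hAp γ, hA'u γ]
    have R : (q:ℂ)^γ / (1 - a*b*c*d*((q:ℂ)^γ)^2) /
        ((q:ℂ)^γ*(q:ℂ) / (1 - a*b*c*d*(((q:ℂ)^γ)^2*(q:ℂ)^2)))
        = (1 - a*b*c*d*(((q:ℂ)^γ)^2*(q:ℂ)^2)) / ((q:ℂ)*(1 - a*b*c*d*((q:ℂ)^γ)^2)) := by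
      rw [div_div_eq_mul_div, div_mul_eq_mul_div, div_div,
        div_eq_div_iff (mul_ne_zero (k0 γ) (mul_ne_zero (hU γ) hq0))
          (mul_ne_zero hq0 (k0 γ))]
      ring
    rw [R, div_mul_div_comm,
      div_eq_div_iff
        (mul_ne_zero (mul_ne_zero hq0 (k0 γ))
          (mul_ne_zero (mul_ne_zero ha (k2m γ)) (k3m γ)))
        (mul_ne_zero (mul_ne_zero haq (k0 γ)) (k2m γ))]
    ring
  have key4 : ∀ γ : ℤ, φ γ / φ (γ-1) * C γ = C' γ := by
    intro γ
    rw [hφu γ, hφm γ, hCu γ, hC'u γ]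
    have R : (q:ℂ)^γ / (1 - a*b*c*d*((q:ℂ)^γ)^2) /
        ((q:ℂ)^γ*(q:ℂ) / ((q:ℂ)^2 - a*b*c*d*((q:ℂ)^γ)^2))
        = ((q:ℂ)^2 - a*b*c*d*((q:ℂ)^γ)^2) / ((q:ℂ)*(1 - a*b*c*d*((q:ℂ)^γ)^2)) := by
      rw [div_div_eq_mul_div, div_mul_eq_mul_div, div_div,
        div_eq_div_iff (mul_ne_zero (k0 γ) (mul_ne_zero (hU γ) hq0))
          (mul_ne_zero hq0 (k0 γ))]
      ring
    rw [R, div_mul_div_comm,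
      div_eq_div_iff
        (mul_ne_zero (mul_ne_zero hq0 (k0 γ)) (mul_ne_zero (k4 γ) (k1 γ)))
        (mul_ne_zero (mul_ne_zero hq0 (k1 γ)) (k0 γ))]
    ring
  refine ⟨?_, key2, key3, key4⟩
  intro h γ
  have c1 : φ γ * (φ γ)⁻¹ = 1 := mul_inv_cancel₀ (hφne γ)
  have k2 := key2 γ
  have k3 := key3 γ
  have k4 := key4 γ
  rw [hL' h γ, hP (Q h) γ, hQ h (γ+1), hQ h γ, add_sub_cancel_right]
  linear_combination (-(h (γ+1))) * k3 - h (γ-1) * k4 - h γ * k2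
    + h γ * (C (γ+1) + A γ) * c1
end

section
/- For m a positive integer, define linear maps on the space of doubly-infinite band operators with Laurent-polynomial coefficients in q^γ by δ_m^+ = (q/(abcd(1-q^{2m})))(λ_Λ - q^m ρ_Λ) + (1 + q/(abcd))(1/(1+q^m)) Id, where λ_Λ (resp. ρ_Λ) denotes left (resp. right) multiplication by the diagonal operator Λ_γ = q^{-γ}(1-q^γ)(1-abcd q^{γ-1}). Then δ_m^+(E^m) = q^γ E^m, i.e., applying δ_m^+ to the m-th shift operator yields multiplication by q^γ followed by the m-th shift. -/
/-!
Write `A = abcd`. Expanding `Λ_γ = A q^{γ-1} + q^{-γ} - 1 - A q^{-1}`, the `q^{-γ}` terms cancel in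
`Λ_γ - q^m Λ_{γ+m} = A q^{γ-1} (1 - q^{2m}) - (1 - q^m)(1 + A q^{-1})`.
The prefactor `q / (A (1 - q^{2m}))` turns the first term into `q^γ` and the second into
`-(1 + q/A) / (1 + q^m)`, which is exactly cancelled by the multiple of the identity in `δ_m⁺`.
-/

section

variable {K : Type*} [Field K]

def diagLambda (q A : K) (γ : ℤ) : K := q ^ (-γ) * (1 - q ^ γ) * (1 - A * q ^ (γ - 1))

theorem diagLambda_eq (q A : K) (hq : q ≠ 0) (γ : ℤ) :
    diagLambda q A γ = A * q ^ (γ - 1) + q ^ (-γ) - 1 - A * q⁻¹ := by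
  have hγ : q ^ (-γ) * q ^ γ = 1 := by rw [zpow_neg, inv_mul_cancel₀ (zpow_ne_zero γ hq)]
  have hγ1 : q ^ (-γ) * q ^ (γ - 1) = q⁻¹ := by
    rw [← zpow_add₀ hq, ← zpow_neg_one]; ring_nf
  unfold diagLambda
  linear_combination (A * q ^ (γ - 1) - 1) * hγ - A * hγ1

theorem diagLambda_sub_pow_mul_diagLambda_add (q A : K) (hq : q ≠ 0) (γ : ℤ) (m : ℕ) :
    diagLambda q A γ - q ^ m * diagLambda q A (γ + m) =
      A * q ^ (γ - 1) * (1 - q ^ (2 * m)) - (1 - q ^ m) * (1 + A * q⁻¹) := by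
  have hshift : q ^ (γ + m - 1) = q ^ (γ - 1) * q ^ m := by
    rw [← zpow_natCast, ← zpow_add₀ hq]; ring_nf
  have hneg : q ^ m * q ^ (-(γ + m)) = q ^ (-γ) := by
    rw [← zpow_natCast, ← zpow_add₀ hq]; ring_nf
  rw [diagLambda_eq q A hq, diagLambda_eq q A hq, hshift]
  linear_combination (-1 : K) * hneg

theorem deltaPlus_shift_coeff_eq_zpow (q A : K) (hq : q ≠ 0) (hA : A ≠ 0) (m : ℕ)
    (hqm : q ^ (2 * m) ≠ 1) (γ : ℤ) :
    q / (A * (1 - q ^ (2 * m))) * (diagLambda q A γ - q ^ m * diagLambda q A (γ + m))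
      + (1 + q / A) * (1 / (1 + q ^ m)) = q ^ γ := by
  have hfac : 1 - q ^ (2 * m) = (1 - q ^ m) * (1 + q ^ m) := by ring
  have h2m : 1 - q ^ (2 * m) ≠ 0 := sub_ne_zero.mpr hqm.symm
  have hplus : 1 + q ^ m ≠ 0 := right_ne_zero_of_mul (hfac ▸ h2m)
  have hshift : q * q ^ (γ - 1) = q ^ γ := by
    rw [← zpow_one_add₀ hq]; ring_nf
  rw [diagLambda_sub_pow_mul_diagLambda_add q A hq]
  field_simp
  rw [hfac]
  linear_combination (A * (1 - q ^ m) * (1 + q ^ m) * (1 + q ^ m)) * hshift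

end

/-- `δ_m⁺(E^m) = q^γ E^m`: applying
`δ_m⁺ = (q/(abcd(1-q^{2m})))(λ_Λ - q^m ρ_Λ) + (1 + q/(abcd))(1/(1+q^m)) Id`
to the `m`-th shift operator yields multiplication by `q^γ` followed by the
`m`-th shift. -/
theorem delta_plus_on_shift
    (q : ℝ) (hq : 0 < q) (hq1 : q < 1)
    (a b c d : ℂ) (habcd : a * b * c * d ≠ 0)
    (m : ℕ) (hm : 1 ≤ m)
    (Λ : ℤ → ℂ)
    (hΛ : ∀ γ : ℤ, Λ γ = (q:ℂ)^(-γ) * (1 - (q:ℂ)^γ) * (1 - a*b*c*d*(q:ℂ)^(γ-1))) :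
    ∀ (h : ℤ → ℂ) (γ : ℤ),
      ((q:ℂ) / (a*b*c*d * (1 - (q:ℂ)^(2*m)))) *
          (Λ γ * h (γ + m) - (q:ℂ)^m * (Λ (γ + m) * h (γ + m)))
        + (1 + (q:ℂ)/(a*b*c*d)) * (1/(1 + (q:ℂ)^m)) * h (γ + m)
      = (q:ℂ)^γ * h (γ + m) := by
  intro h γ
  obtain rfl : Λ = diagLambda (q : ℂ) (a * b * c * d) := funext hΛ
  have hq0 : (q : ℂ) ≠ 0 := by exact_mod_cast hq.ne'
  have hq2m : (q : ℂ) ^ (2 * m) ≠ 1 := by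
    have : q ^ (2 * m) < 1 := pow_lt_one₀ hq.le hq1 (by omega)
    exact_mod_cast this.ne
  rw [← deltaPlus_shift_coeff_eq_zpow (q : ℂ) _ hq0 habcd m hq2m γ]
  ring
end

section
/- Similarly, with δ_m^- = (1/(1-q^{-2m}))(λ_Λ - q^{-m} ρ_Λ) + (1/(1+q^{-m}))(abcd/q + 1) Id, one has δ_m^-(E^m) = q^{-γ} E^m, and moreover δ_m^- = (abcd/q) δ_{-m}^+. -/
/-!
Expanding `Λ_γ = q^{-γ} - 1 - abcd/q + abcd q^{γ-1}` shows that the `abcd q^{γ-1}` terms cancel in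
`Λ_γ - q^{-m} Λ_{γ+m} = q^{-γ}(1 - q^{-2m}) - (1 - q^{-m})(1 + abcd/q)`.
Dividing by `1 - q^{-2m} = (1 - q^{-m})(1 + q^{-m})`, the constant part becomes
`-(1 + abcd/q)/(1 + q^{-m})`, which the identity term of `δ_m⁻` cancels, leaving `q^{-γ} E^m`.
The relation `δ_m⁻ = (abcd/q) δ_{-m}⁺` only rescales coefficients, as `(abcd/q)(q/abcd) = 1`.
-/

section Field

variable {K : Type*} [Field K]

def askeyWilsonEigenvalue (q s : K) (γ : ℤ) : K :=
  q ^ (-γ) * (1 - q ^ γ) * (1 - s * q ^ (γ - 1))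

theorem askeyWilsonEigenvalue_sub_zpow_mul_add {q : K} (hq : q ≠ 0) (s : K) (γ m : ℤ) :
    askeyWilsonEigenvalue q s γ - q ^ (-m) * askeyWilsonEigenvalue q s (γ + m)
      = q ^ (-γ) * (1 - q ^ (-(2 * m))) - (1 - q ^ (-m)) * (1 + s / q) := by
  simp only [askeyWilsonEigenvalue, two_mul, neg_add, zpow_add₀ hq, zpow_sub₀ hq, zpow_neg,
    zpow_one]
  field_simp
  ring

theorem one_div_mul_add_one_div_mul {u : K} (hu : 1 - u ^ 2 ≠ 0) (x k : K) :
    1 / (1 - u ^ 2) * (x * (1 - u ^ 2) - (1 - u) * (1 + k)) + 1 / (1 + u) * (k + 1) = x := by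
  have hu' : 1 + u ≠ 0 := fun h => hu (by linear_combination (1 - u) * h)
  field_simp
  ring

theorem one_div_mul_add_eq_div_mul_div_add {q s : K} (hq : q ≠ 0) (hs : s ≠ 0) (D w x y : K) :
    1 / D * x + w * (s / q + 1) * y = s / q * (q / (s * D) * x + (1 + q / s) * w * y) := by
  rcases eq_or_ne D 0 with rfl | hD
  · simp only [div_zero, zero_mul, mul_zero, zero_add]
    field_simp
  · field_simp

end Field

theorem Complex.ofReal_zpow_ne_one {q : ℝ} (hq : 0 < q) (hq1 : q < 1) {n : ℤ} (hn : n ≠ 0) :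
    (q : ℂ) ^ n ≠ 1 := by
  rw [← Complex.ofReal_zpow, Ne, Complex.ofReal_eq_one, zpow_eq_one_iff_right₀ hq.le hq1.ne]
  exact hn

/-- `δ_m⁻(E^m) = q^{-γ} E^m`, and `δ_m⁻ = (abcd/q) δ_{-m}⁺` as linear maps on
operators, where
`δ_m⁻ = (1/(1-q^{-2m}))(λ_Λ - q^{-m} ρ_Λ) + (1/(1+q^{-m}))(abcd/q + 1) Id`. -/
theorem delta_minus_on_shift_and_relation
    (q : ℝ) (hq : 0 < q) (hq1 : q < 1)
    (a b c d : ℂ) (habcd : a * b * c * d ≠ 0)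
    (m : ℕ) (hm : 1 ≤ m)
    (Λ : ℤ → ℂ)
    (hΛ : ∀ γ : ℤ, Λ γ = (q:ℂ)^(-γ) * (1 - (q:ℂ)^γ) * (1 - a*b*c*d*(q:ℂ)^(γ-1))) :
    (∀ (h : ℤ → ℂ) (γ : ℤ),
      (1 / (1 - (q:ℂ)^(-(2*(m:ℤ))))) *
          (Λ γ * h (γ + m) - (q:ℂ)^(-(m:ℤ)) * (Λ (γ + m) * h (γ + m)))
        + (1 / (1 + (q:ℂ)^(-(m:ℤ)))) * (a*b*c*d/(q:ℂ) + 1) * h (γ + m)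
      = (q:ℂ)^(-γ) * h (γ + m)) ∧
    (∀ (T : (ℤ → ℂ) → (ℤ → ℂ)) (h : ℤ → ℂ) (γ : ℤ),
      (1 / (1 - (q:ℂ)^(-(2*(m:ℤ))))) *
          (Λ γ * T h γ - (q:ℂ)^(-(m:ℤ)) * T (fun γ' => Λ γ' * h γ') γ)
        + (1 / (1 + (q:ℂ)^(-(m:ℤ)))) * (a*b*c*d/(q:ℂ) + 1) * T h γ
      = (a*b*c*d/(q:ℂ)) *
        (((q:ℂ) / (a*b*c*d * (1 - (q:ℂ)^(-(2*(m:ℤ)))))) *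
            (Λ γ * T h γ - (q:ℂ)^(-(m:ℤ)) * T (fun γ' => Λ γ' * h γ') γ)
          + (1 + (q:ℂ)/(a*b*c*d)) * (1/(1 + (q:ℂ)^(-(m:ℤ)))) * T h γ)) := by
  have hq0 : (q : ℂ) ≠ 0 := Complex.ofReal_ne_zero.mpr hq.ne'
  refine ⟨fun h γ => ?_, fun T h γ => one_div_mul_add_eq_div_mul_div_add hq0 habcd _ _ _ _⟩
  obtain rfl : Λ = askeyWilsonEigenvalue (q : ℂ) (a * b * c * d) := funext hΛ
  have hsq : (q : ℂ) ^ (-(2 * (m : ℤ))) = ((q : ℂ) ^ (-(m : ℤ))) ^ 2 := by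
    rw [← zpow_natCast, ← zpow_mul]
    ring_nf
  have hden : 1 - ((q : ℂ) ^ (-(m : ℤ))) ^ 2 ≠ 0 := by
    rw [← hsq, sub_ne_zero, ne_comm]
    exact Complex.ofReal_zpow_ne_one hq hq1 (by omega)
  have hshift := askeyWilsonEigenvalue_sub_zpow_mul_add hq0 (a * b * c * d) γ m
  rw [hsq] at hshift ⊢
  linear_combination h (γ + m) / (1 - ((q : ℂ) ^ (-(m : ℤ))) ^ 2) * hshift
    + h (γ + m) * one_div_mul_add_one_div_mul hden ((q : ℂ) ^ (-γ)) (a * b * c * d / q)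
end

section
/- Under the hypotheses of the previous statement (Darboux chain from L₀ to L̂ with intertwiner 𝒬 = Q_{m-1}⋯Q₀), defining ℒ = ∏_{i=1}^m (L₀ - x_{ji} Id), 𝒫 = P₀P₁⋯P_{m-1}, one has ℒ = 𝒫 𝒬 and 𝒬 𝒫 = ∏_{i=1}^m (L̂ - x_{ji} Id). -/
open List

section Aux

variable {R : Type*} [Ring R] [Algebra ℂ R]

private lemma smul_one_comm (c : ℂ) (y : R) : (c • (1:R)) * y = y * (c • (1:R)) := by
  rw [smul_mul_assoc, one_mul, mul_smul_comm, mul_one]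

private lemma commute_factor (A : R) (a b : ℂ) :
    Commute (A - a • 1) (A - b • 1) := by
  have h1 : Commute A (b • (1:R)) := (Commute.one_right A).smul_right b
  have h2 : Commute (a • (1:R)) A := (Commute.one_left A).smul_left a
  have h3 : Commute (a • (1:R)) (b • (1:R)) :=
    ((Commute.one_right (a • (1:R)))).smul_right b
  exact ((Commute.refl A).sub_right h1).sub_left (h2.sub_right h3)

private lemma prod_commute (A : R) (a : ℂ) (x : ℕ → ℂ) (l : List ℕ) :
    (A - a • 1) * (l.map (fun i => A - x i • 1)).prod
      = (l.map (fun i => A - x i • 1)).prod * (A - a • 1) := by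
  refine (Commute.list_prod_right _ _ ?_).eq
  intro y hy
  obtain ⟨i, _, rfl⟩ := List.mem_map.mp hy
  exact commute_factor A a (x i)

private lemma prod_pass (x : ℕ → ℂ) (A B P : R) (h : A * P = P * B) (l : List ℕ) :
    (l.map (fun i => A - x i • 1)).prod * P = P * (l.map (fun i => B - x i • 1)).prod := by
  induction l with
  | nil => simp
  | cons c t ih =>
    simp only [List.map_cons, List.prod_cons, mul_assoc, ih]
    rw [← mul_assoc, ← mul_assoc, sub_mul, h, smul_one_comm, ← mul_sub]

private lemma Qprod_intertwine (Q L : ℕ → R) :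
    ∀ m : ℕ, (∀ k < m, Q k * L k = L (k+1) * Q k) →
    ((range m).reverse.map Q).prod * L 0 = L m * ((range m).reverse.map Q).prod := by
  intro m
  induction m with
  | zero => simp
  | succ n ih =>
    intro h
    have := ih (fun k hk => h k (by omega))
    simp only [range_succ, reverse_append, reverse_cons, reverse_nil, nil_append,
      cons_append, map_cons, prod_cons]
    rw [mul_assoc, this, ← mul_assoc, h n (by omega), mul_assoc]

private lemma aux (m : ℕ) (x : ℕ → ℂ) (P Q : ℕ → R) (L : ℕ → R)
    (h1 : ∀ k < m, L k = x k • 1 + P k * Q k)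
    (h2 : ∀ k < m, L (k+1) = x k • 1 + Q k * P k) :
    ((range m).map (fun i => L 0 - x i • 1)).prod
        = ((range m).map P).prod * ((range m).reverse.map Q).prod ∧
    ((range m).reverse.map Q).prod * ((range m).map P).prod
        = ((range m).map (fun i => L m - x i • 1)).prod := by
  induction m with
  | zero => simp
  | succ n ih =>
    obtain ⟨ihA, ihB⟩ := ih (fun k hk => h1 k (by omega)) (fun k hk => h2 k (by omega))
    have hint : ∀ k < n, Q k * L k = L (k+1) * Q k := by
      intro k hk
      rw [h1 k (by omega), h2 k (by omega), mul_add, add_mul, ← mul_assoc,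
        mul_smul_comm, mul_one, smul_mul_assoc, one_mul]
    have hQL := Qprod_intertwine Q L n hint
    have hQc : ((range n).reverse.map Q).prod * (L 0 - x n • 1)
        = (L n - x n • 1) * ((range n).reverse.map Q).prod := by
      rw [mul_sub, sub_mul, hQL, ← smul_one_comm]
    have hLP : L n * P n = P n * L (n+1) := by
      rw [h1 n (by omega), h2 n (by omega), add_mul, mul_add, mul_assoc,
        mul_smul_comm, mul_one, smul_mul_assoc, one_mul]
    have hPQ : L n - x n • 1 = P n * Q n := by
      rw [h1 n (by omega)]; exact add_sub_cancel_left _ _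
    have hQP : L (n+1) - x n • 1 = Q n * P n := by
      rw [h2 n (by omega)]; exact add_sub_cancel_left _ _
    constructor
    · rw [range_succ]
      simp only [map_append, prod_append, map_cons, prod_cons, map_nil, prod_nil,
        mul_one, reverse_append, reverse_cons, reverse_nil, nil_append, cons_append]
      rw [ihA, mul_assoc, hQc, hPQ]
      simp [mul_assoc]
    · rw [range_succ]
      simp only [map_append, prod_append, map_cons, prod_cons, map_nil, prod_nil,
        mul_one, reverse_append, reverse_cons, reverse_nil, nil_append, cons_append]
      calc Q n * ((range n).reverse.map Q).prod * (((range n).map P).prod * P n)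
          = Q n * ((((range n).reverse.map Q).prod * ((range n).map P).prod) * P n) := by
            simp [mul_assoc]
        _ = Q n * (((range n).map (fun i => L n - x i • 1)).prod * P n) := by rw [ihB]
        _ = Q n * (P n * ((range n).map (fun i => L (n+1) - x i • 1)).prod) := by
            rw [prod_pass x (L n) (L (n+1)) (P n) hLP]
        _ = (L (n+1) - x n • 1) * ((range n).map (fun i => L (n+1) - x i • 1)).prod := by
            rw [hQP, mul_assoc]
        _ = ((range n).map (fun i => L (n+1) - x i • 1)).prod * (L (n+1) - x n • 1) := by
            rw [prod_commute]

end Aux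

/-- For a Darboux chain from `L₀` to `L̂ = L m`, with `ℒ = ∏ (L₀ - x_i)`,
`𝒫 = P₀ ⋯ P_{m-1}` and `𝒬 = Q_{m-1} ⋯ Q₀`, one has `ℒ = 𝒫𝒬` and
`𝒬𝒫 = ∏ (L̂ - x_i)`. -/
theorem darboux_chain_factorization
    (V : Type*) [AddCommGroup V] [Module ℂ V]
    (m : ℕ) (hm : 1 ≤ m) (x : Fin m → ℂ)
    (P Q : Fin m → Module.End ℂ V) (L : Fin (m+1) → Module.End ℂ V)
    (hfac : ∀ k : Fin m, L k.castSucc = x k • (1 : Module.End ℂ V) + P k * Q k)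
    (hfac' : ∀ k : Fin m, L k.succ = x k • (1 : Module.End ℂ V) + Q k * P k) :
    (List.ofFn (fun i : Fin m => L 0 - x i • (1 : Module.End ℂ V))).prod
        = (List.ofFn P).prod * (List.ofFn (fun i : Fin m => Q i.rev)).prod ∧
    (List.ofFn (fun i : Fin m => Q i.rev)).prod * (List.ofFn P).prod
        = (List.ofFn (fun i : Fin m =>
            L (Fin.last m) - x i • (1 : Module.End ℂ V))).prod := by
  classical
  have h1 : ∀ k < m, (fun n => if h : n < m + 1 then L ⟨n, h⟩ else 0) k
      = (fun n => if h : n < m then x ⟨n, h⟩ else 0) k • 1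
        + (fun n => if h : n < m then P ⟨n, h⟩ else 0) k
          * (fun n => if h : n < m then Q ⟨n, h⟩ else 0) k := by
    intro k hk
    have := hfac ⟨k, hk⟩
    simp only [dif_pos hk, dif_pos (Nat.lt_succ_of_lt hk)]
    rwa [Fin.castSucc_mk] at this
  have h2 : ∀ k < m, (fun n => if h : n < m + 1 then L ⟨n, h⟩ else 0) (k+1)
      = (fun n => if h : n < m then x ⟨n, h⟩ else 0) k • 1
        + (fun n => if h : n < m then Q ⟨n, h⟩ else 0) k
          * (fun n => if h : n < m then P ⟨n, h⟩ else 0) k := by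
    intro k hk
    have := hfac' ⟨k, hk⟩
    simp only [dif_pos hk, dif_pos (Nat.succ_lt_succ hk)]
    rwa [Fin.succ_mk] at this
  have key := aux m (fun n => if h : n < m then x ⟨n, h⟩ else 0)
    (fun n => if h : n < m then P ⟨n, h⟩ else 0)
    (fun n => if h : n < m then Q ⟨n, h⟩ else 0)
    (fun n => if h : n < m + 1 then L ⟨n, h⟩ else 0) h1 h2
  have e1 : List.ofFn (fun i : Fin m => L 0 - x i • (1 : Module.End ℂ V))
      = (range m).map (fun i => (if h : (0:ℕ) < m + 1 then L ⟨0, h⟩ else 0)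
          - (if h : i < m then x ⟨i, h⟩ else 0) • 1) := by
    apply List.ext_getElem
    · simp
    · intro i hi hi'
      have him : i < m := by simpa using hi
      simp only [List.getElem_ofFn, List.getElem_map, List.getElem_range,
        dif_pos him, dif_pos (Nat.succ_pos m)]
      congr 1
  have e2 : List.ofFn P = (range m).map (fun n => if h : n < m then P ⟨n, h⟩ else 0) := by
    apply List.ext_getElem
    · simp
    · intro i hi hi'
      have him : i < m := by simpa using hi
      simp [List.getElem_ofFn, List.getElem_map, List.getElem_range, dif_pos him]
  have e3 : List.ofFn (fun i : Fin m => Q i.rev)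
      = (range m).reverse.map (fun n => if h : n < m then Q ⟨n, h⟩ else 0) := by
    apply List.ext_getElem
    · simp
    · intro i hi hi'
      have him : i < m := by simpa using hi
      simp only [List.getElem_ofFn, List.getElem_map, List.getElem_reverse,
        List.length_range, List.getElem_range,
        dif_pos (show m - 1 - i < m by omega)]
      congr 1
      ext
      simp [Fin.rev]
      omega
  have e4 : List.ofFn (fun i : Fin m => L (Fin.last m) - x i • (1 : Module.End ℂ V))
      = (range m).map (fun i => (if h : m < m + 1 then L ⟨m, h⟩ else 0)
          - (if h : i < m then x ⟨i, h⟩ else 0) • 1) := by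
    apply List.ext_getElem
    · simp
    · intro i hi hi'
      have him : i < m := by simpa using hi
      simp only [List.getElem_ofFn, List.getElem_map, List.getElem_range,
        dif_pos him, dif_pos (Nat.lt_succ_self m)]
      congr 1
  rw [e1, e2, e3, e4]
  exact key
end

section
/- Under the assumption d² = q^l with l ≥ 1 an integer and a = d q^α, the function g_γ = q^{γ(l+α-1)} / ((q^{γ+1}; q)_{l+α-1} (bc q^γ; q)_{l+α-1}), viewed as a rational function of t = q^γ, is invariant under the involution t ↦ q^{1-α-l}/(bc t). -/
/-!
Put `e = bc`, `N = l + α - 1` and let `s = q^{-N}/(e t)`, so that `e s t q^N = 1`. Then the `i`-th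
factor `1 - e t q^i` of one product at `t` and the `(N-1-i)`-th factor `1 - s q^{N-i}` of the other
product at `s` satisfy `x (1 - y) = x - 1` with `x y = 1`; likewise for `1 - t q^{i+1}` and
`1 - e s q^{N-1-i}`. So each product at `s` is, up to sign and a monomial in `t` and `q`, the other
product at `t`, and the monomials cancel exactly against `s^N / t^N`.
-/

open Finset

theorem Finset.prod_range_mul_prod_range_of_reflect {M : Type*} [CommMonoid M] {x y z : ℕ → M}
    {N : ℕ} (h : ∀ i < N, x i * y (N - 1 - i) = z i) :
    (∏ i ∈ range N, x i) * ∏ i ∈ range N, y i = ∏ i ∈ range N, z i := by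
  rw [← prod_range_reflect y N, ← prod_mul_distrib]
  exact prod_congr rfl fun i hi => h i (mem_range.mp hi)

theorem Finset.prod_range_mul_prod_range_one_sub_of_reflect {R : Type*} [CommRing R]
    {x y : ℕ → R} {N : ℕ} (h : ∀ i < N, x i * y (N - 1 - i) = 1) :
    (∏ i ∈ range N, x i) * ∏ i ∈ range N, (1 - y i) = (-1) ^ N * ∏ i ∈ range N, (1 - x i) := by
  rw [prod_range_mul_prod_range_of_reflect (z := fun i => -(1 - x i)), prod_neg, card_range]
  intro i hi
  rw [mul_one_sub, h i hi, neg_sub]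

section Weight

variable {K : Type*} [Field K]

/-- With `e = bc` and `N = l + α - 1`, `qWeight q e N (q^γ)` is the paper's `g_γ`. -/
def qWeight (q e : K) (N : ℕ) (t : K) : K :=
  t ^ N / ((∏ i ∈ range N, (1 - t * q ^ (i + 1))) * ∏ i ∈ range N, (1 - e * t * q ^ i))

theorem qWeight_eq_of_mul_eq_one {q e s t : K} {N : ℕ} (h : e * s * t * q ^ N = 1) :
    qWeight q e N s = qWeight q e N t := by
  have pow_split : ∀ {i j : ℕ}, i + j = N → e * s * t * q ^ i * q ^ j = 1 := fun hij => by
    rw [mul_assoc, ← pow_add, hij, h]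
  set A := ∏ i ∈ range N, e * t * q ^ i
  set C := ∏ i ∈ range N, t * q ^ (i + 1)
  have hA : A * ∏ i ∈ range N, (1 - s * q ^ (i + 1)) =
      (-1) ^ N * ∏ i ∈ range N, (1 - e * t * q ^ i) :=
    prod_range_mul_prod_range_one_sub_of_reflect fun i hi => by
      linear_combination pow_split (i := i) (j := N - 1 - i + 1) (by omega)
  have hC : C * ∏ i ∈ range N, (1 - e * s * q ^ i) =
      (-1) ^ N * ∏ i ∈ range N, (1 - t * q ^ (i + 1)) :=
    prod_range_mul_prod_range_one_sub_of_reflect fun i hi => by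
      linear_combination pow_split (i := i + 1) (j := N - 1 - i) (by omega)
  have hsAC : s ^ N * (A * C) = t ^ N := by
    have hAsC : A * ∏ i ∈ range N, s * (t * q ^ (i + 1)) = ∏ _i ∈ range N, t :=
      prod_range_mul_prod_range_of_reflect fun i hi => by
        linear_combination t * pow_split (i := i) (j := N - 1 - i + 1) (by omega)
    rw [prod_mul_distrib, prod_const, prod_const, card_range] at hAsC
    rw [← hAsC]; ring
  have hAC_ne : A * C ≠ 0 := by
    have ht : t ≠ 0 := right_ne_zero_of_mul (left_ne_zero_of_mul_eq_one h)
    exact right_ne_zero_of_mul (hsAC ▸ pow_ne_zero N ht)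
  have hsign : ((-1 : K) ^ N) * (-1) ^ N = 1 := by rw [← mul_pow]; norm_num
  calc qWeight q e N s
      = s ^ N * (A * C) / ((A * ∏ i ∈ range N, (1 - s * q ^ (i + 1))) *
          (C * ∏ i ∈ range N, (1 - e * s * q ^ i))) := by
        rw [qWeight, mul_mul_mul_comm A, mul_comm (A * C), mul_div_mul_right _ _ hAC_ne]
    _ = t ^ N / (((-1) ^ N * ∏ i ∈ range N, (1 - e * t * q ^ i)) *
          ((-1) ^ N * ∏ i ∈ range N, (1 - t * q ^ (i + 1)))) := by rw [hA, hC, hsAC]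
    _ = qWeight q e N t := by
        rw [qWeight]; congr 1; linear_combination (∏ i ∈ range N, (1 - t * q ^ (i + 1))) *
          (∏ i ∈ range N, (1 - e * t * q ^ i)) * hsign

end Weight

theorem g_gamma_invariant_general
    (q : ℝ) (hq : 0 < q)
    (b c : ℂ) (hb : b ≠ 0) (hc : c ≠ 0)
    (α l : ℕ) (hl : 1 ≤ l)
    (g : ℂ → ℂ)
    (hg : ∀ t : ℂ, g t = t ^ (l + α - 1) /
      ((∏ i ∈ Finset.range (l + α - 1), (1 - t * (q:ℂ)^(i+1))) *
       (∏ i ∈ Finset.range (l + α - 1), (1 - b*c*t*(q:ℂ)^i)))) :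
    ∀ t : ℂ, t ≠ 0 →
      ((∏ i ∈ Finset.range (l + α - 1), (1 - t * (q:ℂ)^(i+1))) *
       (∏ i ∈ Finset.range (l + α - 1), (1 - b*c*t*(q:ℂ)^i))) ≠ 0 →
      ((∏ i ∈ Finset.range (l + α - 1),
          (1 - ((q:ℂ)^((1:ℤ) - (α:ℤ) - (l:ℤ))/(b*c*t)) * (q:ℂ)^(i+1))) *
       (∏ i ∈ Finset.range (l + α - 1),
          (1 - b*c*((q:ℂ)^((1:ℤ) - (α:ℤ) - (l:ℤ))/(b*c*t))*(q:ℂ)^i))) ≠ 0 →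
      g ((q:ℂ)^((1:ℤ) - (α:ℤ) - (l:ℤ)) / (b*c*t)) = g t := by
  intro t ht _ _
  have hq0 : (q : ℂ) ≠ 0 := Complex.ofReal_ne_zero.mpr hq.ne'
  have hexp : (1 : ℤ) - α - l = -((l + α - 1 : ℕ) : ℤ) := by omega
  rw [show g = qWeight (q : ℂ) (b * c) (l + α - 1) from funext hg, hexp]
  apply qWeight_eq_of_mul_eq_one
  rw [zpow_neg, zpow_natCast]
  field_simp

/-- With `d² = q^l` and `a = d q^α`, the function
`g(t) = t^{l+α-1} / (∏_{i=1}^{l+α-1}(1 - t q^i) · ∏_{i=0}^{l+α-2}(1 - bc t q^i))`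
is invariant under the involution `t ↦ q^{1-α-l}/(bc t)`. -/
theorem g_gamma_invariant
    (q : ℝ) (hq : 0 < q) (hq1 : q < 1)
    (a b c d : ℂ) (hb : b ≠ 0) (hc : c ≠ 0)
    (α l : ℕ) (hα : 1 ≤ α) (hl : 1 ≤ l)
    (hd : d ^ 2 = (q : ℂ) ^ l) (ha : a = d * (q : ℂ) ^ α)
    (g : ℂ → ℂ)
    (hg : ∀ t : ℂ, g t = t ^ (l + α - 1) /
      ((∏ i ∈ Finset.range (l + α - 1), (1 - t * (q:ℂ)^(i+1))) *
       (∏ i ∈ Finset.range (l + α - 1), (1 - b*c*t*(q:ℂ)^i)))) :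
    ∀ t : ℂ, t ≠ 0 →
      ((∏ i ∈ Finset.range (l + α - 1), (1 - t * (q:ℂ)^(i+1))) *
       (∏ i ∈ Finset.range (l + α - 1), (1 - b*c*t*(q:ℂ)^i))) ≠ 0 →
      ((∏ i ∈ Finset.range (l + α - 1),
          (1 - ((q:ℂ)^((1:ℤ) - (α:ℤ) - (l:ℤ))/(b*c*t)) * (q:ℂ)^(i+1))) *
       (∏ i ∈ Finset.range (l + α - 1),
          (1 - b*c*((q:ℂ)^((1:ℤ) - (α:ℤ) - (l:ℤ))/(b*c*t))*(q:ℂ)^i))) ≠ 0 →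
      g ((q:ℂ)^((1:ℤ) - (α:ℤ) - (l:ℤ)) / (b*c*t)) = g t :=
  g_gamma_invariant_general q hq b c hb hc α l hl g hg
end

section
/- Let λ₁,...,λ_g be distinct complex numbers with λ_i ≠ ±1 and λ_i ≠ λ_j^{±1} for i ≠ j. Consider the polynomial q(z) = c₀ + c₁z + ⋯ + c_g z^g of degree at most g satisfying q(λ_i) = q(λ_i^{-1}) for all i = 1,...,g. Then q is constant, i.e., c₁ = ⋯ = c_g = 0. Equivalently, the determinant of the associated g×g linear system equals ∏ λ_i^{-g} ∏(λ_i² - 1) ∏_{i<j}(λ_i - λ_j) ∏_{i<j}(1 - λ_iλ_j) ≠ 0. -/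
open Polynomial Finset

/-- Key lemma: the kernel of the linear system is trivial. -/
lemma key_kernel (g : ℕ) (lam : Fin g → ℂ)
    (h0 : ∀ i, lam i ≠ 0) (h1 : ∀ i, (lam i) ^ 2 ≠ 1)
    (h2 : ∀ i j, i ≠ j → lam i ≠ lam j)
    (h3 : ∀ i j, i ≠ j → lam i * lam j ≠ 1)
    (c : Fin g → ℂ)
    (hc : ∀ i, ∑ j : Fin g, ((lam i) ^ ((j : ℕ) + 1) - ((lam i)⁻¹) ^ ((j : ℕ) + 1)) * c j = 0) :
    c = 0 := by
  classical
  -- the auxiliary polynomial r(z) = z^g (q(z) - q(1/z)) where q(z) = ∑ c_j z^{j+1}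
  set r : Polynomial ℂ :=
    ∑ j : Fin g, C (c j) * (X ^ (g + (j : ℕ) + 1) - X ^ (g - 1 - (j : ℕ))) with hr
  -- evaluation formula for nonzero x
  have heval : ∀ x : ℂ, x ≠ 0 →
      r.eval x = x ^ g * ∑ j : Fin g, (x ^ ((j : ℕ) + 1) - (x⁻¹) ^ ((j : ℕ) + 1)) * c j := by
    intro x hx
    rw [hr]
    simp only [eval_finset_sum, eval_mul, eval_C, eval_sub, eval_pow, eval_X, Finset.mul_sum]
    refine Finset.sum_congr rfl fun j _ => ?_
    have hj : (j : ℕ) + 1 ≤ g := j.2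
    have e1 : x ^ (g + (j : ℕ) + 1) = x ^ g * x ^ ((j : ℕ) + 1) := by
      rw [← pow_add]; congr 1
    have e2 : x ^ (g - 1 - (j : ℕ)) = x ^ g * (x⁻¹) ^ ((j : ℕ) + 1) := by
      rw [inv_pow, ← div_eq_mul_inv, eq_div_iff (pow_ne_zero _ hx), ← pow_add]
      congr 1; omega
    rw [e1, e2]; ring
  have hroot_lam : ∀ i, r.eval (lam i) = 0 := fun i => by
    rw [heval _ (h0 i), hc i, mul_zero]
  have hroot_inv : ∀ i, r.eval (lam i)⁻¹ = 0 := by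
    intro i
    rw [heval _ (inv_ne_zero (h0 i))]
    have hs : ∑ j : Fin g,
        (((lam i)⁻¹) ^ ((j : ℕ) + 1) - (((lam i)⁻¹)⁻¹) ^ ((j : ℕ) + 1)) * c j
        = ∑ j : Fin g,
          -(((lam i) ^ ((j : ℕ) + 1) - ((lam i)⁻¹) ^ ((j : ℕ) + 1)) * c j) :=
      Finset.sum_congr rfl fun j _ => by rw [inv_inv]; ring
    rw [hs, Finset.sum_neg_distrib, hc i, neg_zero, mul_zero]
  have hroot_one : r.eval 1 = 0 := by
    rw [hr]
    simp only [eval_finset_sum, eval_mul, eval_C, eval_sub, eval_pow, eval_X, one_pow,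
      sub_self, mul_zero, Finset.sum_const_zero]
  have hroot_negone : r.eval (-1) = 0 := by
    rw [hr]
    simp only [eval_finset_sum, eval_mul, eval_C, eval_sub, eval_pow, eval_X]
    refine Finset.sum_eq_zero fun j _ => ?_
    have hj : (j : ℕ) + 1 ≤ g := j.2
    have h : g + (j : ℕ) + 1 = (g - 1 - (j : ℕ)) + 2 * ((j : ℕ) + 1) := by omega
    rw [h, pow_add, pow_mul, neg_one_sq, one_pow, mul_one, sub_self, mul_zero]
  have hdeg : r.natDegree ≤ 2 * g := by
    rw [hr]
    refine natDegree_sum_le_of_forall_le _ _ fun j _ => ?_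
    refine le_trans (natDegree_C_mul_le _ _) (le_trans (natDegree_sub_le _ _) ?_)
    have hj : (j : ℕ) + 1 ≤ g := j.2
    simp only [natDegree_X_pow]
    omega
  -- r = 0 since it has 2g+2 distinct roots
  have hr0 : r = 0 := by
    by_contra hne
    have hlaminj : Function.Injective lam := fun i j h => by
      by_contra hij; exact h2 i j hij h
    set A : Finset ℂ := Finset.univ.image lam with hA
    set B : Finset ℂ := Finset.univ.image (fun i => (lam i)⁻¹) with hB
    have hAcard : A.card = g := by
      rw [hA, Finset.card_image_of_injective _ hlaminj, Finset.card_univ, Fintype.card_fin]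
    have hBinj : Function.Injective (fun i => (lam i)⁻¹) := fun i j h =>
      hlaminj (inv_injective h)
    have hBcard : B.card = g := by
      rw [hB, Finset.card_image_of_injective _ hBinj, Finset.card_univ, Fintype.card_fin]
    have hdisj : Disjoint A B := by
      rw [Finset.disjoint_left]
      rintro x hx hx'
      rw [hA, Finset.mem_image] at hx
      rw [hB, Finset.mem_image] at hx'
      obtain ⟨i, -, rfl⟩ := hx
      obtain ⟨j, -, hj⟩ := hx'
      have hm : lam i * lam j = 1 := by
        rw [← hj]; exact inv_mul_cancel₀ (h0 j)
      by_cases hij : i = j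
      · subst hij; exact h1 i (by rw [sq]; exact hm)
      · exact h3 i j hij hm
    have hmemA : ∀ x : ℂ, x ∈ A ∪ B → x ^ 2 ≠ 1 := by
      intro x hx
      rcases Finset.mem_union.1 hx with h | h
      · rw [hA, Finset.mem_image] at h
        obtain ⟨i, -, rfl⟩ := h; exact h1 i
      · rw [hB, Finset.mem_image] at h
        obtain ⟨i, -, rfl⟩ := h
        intro hsq
        apply h1 i
        have : ((lam i)⁻¹) ^ 2 = ((lam i) ^ 2)⁻¹ := by rw [inv_pow]
        rw [this] at hsq
        rw [← inv_inv ((lam i) ^ 2), hsq, inv_one]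
    have h1mem : (1 : ℂ) ∉ A ∪ B := fun h => hmemA 1 h (by norm_num)
    have hneg1mem : (-1 : ℂ) ∉ A ∪ B := fun h => hmemA (-1) h (by norm_num)
    set s : Finset ℂ := insert (1 : ℂ) (insert (-1 : ℂ) (A ∪ B)) with hsdef
    have hscard : s.card = 2 * g + 2 := by
      rw [hsdef, Finset.card_insert_of_notMem, Finset.card_insert_of_notMem hneg1mem,
        Finset.card_union_of_disjoint hdisj, hAcard, hBcard]
      · ring
      · rw [Finset.mem_insert]
        push_neg
        exact ⟨by norm_num, h1mem⟩
    have hsub : s.val ⊆ r.roots := by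
      intro x hx
      have hx' : x ∈ s := hx
      rw [Polynomial.mem_roots hne]
      rw [hsdef, Finset.mem_insert, Finset.mem_insert, Finset.mem_union] at hx'
      rcases hx' with rfl | rfl | h | h
      · exact hroot_one
      · exact hroot_negone
      · rw [hA, Finset.mem_image] at h
        obtain ⟨i, -, rfl⟩ := h; exact hroot_lam i
      · rw [hB, Finset.mem_image] at h
        obtain ⟨i, -, rfl⟩ := h; exact hroot_inv i
    have := Polynomial.card_le_degree_of_subset_roots hsub
    rw [hscard] at this
    omega
  -- extract the coefficients
  funext j
  have hcoeff : r.coeff (g + (j : ℕ) + 1) = c j := by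
    rw [hr, finset_sum_coeff]
    rw [Finset.sum_eq_single j]
    · have hj : (j : ℕ) < g := j.2
      have hne2 : ¬ (g + (j : ℕ) + 1 = g - 1 - (j : ℕ)) := by omega
      simp [coeff_X_pow, hne2]
    · intro k _ hkj
      have hk : (k : ℕ) ≠ (j : ℕ) := fun h => hkj (Fin.ext h)
      have hjk : (j : ℕ) ≠ (k : ℕ) := Ne.symm hk
      have hkg : (k : ℕ) < g := k.2
      have hne1 : ¬ (g + (j : ℕ) + 1 = g + (k : ℕ) + 1) := by omega
      have hne2 : ¬ (g + (j : ℕ) + 1 = g - 1 - (k : ℕ)) := by omega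
      simp [coeff_X_pow, hne1, hne2, hjk]
    · intro h; exact absurd (Finset.mem_univ j) h
  have : c j = 0 := by rw [← hcoeff, hr0, coeff_zero]
  simpa using this

/-- If `λ₁,…,λ_g` are nonzero with `λ_i ≠ ±1` and `λ_i ≠ λ_j^{±1}` for
`i ≠ j`, then any polynomial of degree at most `g` with `q(λ_i) = q(λ_i⁻¹)`
for all `i` is constant; equivalently, the determinant of the associated
`g×g` linear system is nonzero. -/
theorem polynomial_constant_of_symmetric_values
    (g : ℕ) (hg : 1 ≤ g) (lam : Fin g → ℂ)
    (h0 : ∀ i, lam i ≠ 0) (h1 : ∀ i, (lam i) ^ 2 ≠ 1)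
    (h2 : ∀ i j, i ≠ j → lam i ≠ lam j)
    (h3 : ∀ i j, i ≠ j → lam i * lam j ≠ 1) :
    (Matrix.det (Matrix.of fun i j : Fin g =>
        (lam i) ^ ((j : ℕ) + 1) - ((lam i)⁻¹) ^ ((j : ℕ) + 1)) ≠ 0) ∧
    (∀ p : Polynomial ℂ, p.natDegree ≤ g →
      (∀ i, p.eval (lam i) = p.eval (lam i)⁻¹) →
      ∃ cst : ℂ, p = Polynomial.C cst) := by
  have hdet : Matrix.det (Matrix.of fun i j : Fin g =>
      (lam i) ^ ((j : ℕ) + 1) - ((lam i)⁻¹) ^ ((j : ℕ) + 1)) ≠ 0 := by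
    intro hdet0
    obtain ⟨v, hv, hMv⟩ := Matrix.exists_mulVec_eq_zero_iff.2 hdet0
    apply hv
    apply key_kernel g lam h0 h1 h2 h3 v
    intro i
    have := congrFun hMv i
    simpa [Matrix.mulVec, dotProduct] using this
  refine ⟨hdet, fun p hpdeg hpsym => ?_⟩
  have hc0 : (fun j : Fin g => p.coeff ((j : ℕ) + 1)) = 0 := by
    apply key_kernel g lam h0 h1 h2 h3
    intro i
    have hev : ∀ x : ℂ, p.eval x = ∑ k ∈ Finset.range (g + 1), p.coeff k * x ^ k :=
      fun x => eval_eq_sum_range' (lt_of_le_of_lt hpdeg (Nat.lt_succ_self g)) x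
    have hsplit : ∀ x : ℂ, ∑ k ∈ Finset.range (g + 1), p.coeff k * x ^ k
        = p.coeff 0 + ∑ k ∈ Finset.range g, p.coeff (k + 1) * x ^ (k + 1) := by
      intro x
      rw [Finset.sum_range_succ' (fun k => p.coeff k * x ^ k) g]
      simp [add_comm]
    have hthis := hpsym i
    rw [hev, hev, hsplit, hsplit] at hthis
    have hkey : ∑ k ∈ Finset.range g, p.coeff (k + 1) * (lam i) ^ (k + 1)
        = ∑ k ∈ Finset.range g, p.coeff (k + 1) * ((lam i)⁻¹) ^ (k + 1) :=
      add_left_cancel hthis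
    rw [Fin.sum_univ_eq_sum_range
      (fun k => ((lam i) ^ (k + 1) - ((lam i)⁻¹) ^ (k + 1)) * p.coeff (k + 1)) g]
    calc ∑ k ∈ Finset.range g, ((lam i) ^ (k + 1) - ((lam i)⁻¹) ^ (k + 1)) * p.coeff (k + 1)
        = (∑ k ∈ Finset.range g, p.coeff (k + 1) * (lam i) ^ (k + 1))
          - ∑ k ∈ Finset.range g, p.coeff (k + 1) * ((lam i)⁻¹) ^ (k + 1) := by
          rw [← Finset.sum_sub_distrib]
          exact Finset.sum_congr rfl fun k _ => by ring
      _ = 0 := by rw [hkey, sub_self]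
  have hcoeffzero : ∀ k, 1 ≤ k → k ≤ g → p.coeff k = 0 := by
    intro k hk1 hkg
    have := congrFun hc0 ⟨k - 1, by omega⟩
    simpa [Nat.sub_add_cancel hk1] using this
  have hnd : p.natDegree = 0 := by
    by_contra h
    have h1le : 1 ≤ p.natDegree := Nat.one_le_iff_ne_zero.2 h
    have hlc : p.coeff p.natDegree = 0 := hcoeffzero _ h1le hpdeg
    have hp0 : p = 0 := Polynomial.leadingCoeff_eq_zero.1 hlc
    rw [hp0] at h
    exact h Polynomial.natDegree_zero
  obtain ⟨a, ha⟩ := Polynomial.natDegree_eq_zero.1 hnd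
  exact ⟨a, ha.symm⟩
end

section
/- Residue duality for the planes V_n and V_n*: Let λ₁,...,λ_g, μ₁,...,μ_g be 2g distinct nonzero complex numbers, δ₁,...,δ_g nonzero complex numbers, and define δ_i* = δ_i ∏_{j≠i} ((μ_i - μ_j)(μ_i - λ_j)) / ((λ_i - μ_j)(λ_i - λ_j)). Suppose w(z) = p(z)/∏_{i}(z - λ_i) with p a polynomial vanishing to order ≥ n at 0 (if n ≥ 0) or with pole of order ≤ -n at 0, such that the function f = w·∏(z-λ_i) satisfies f(λ_i) = δ_i f(μ_i) for each i; and suppose w*(z) = p*(z)/∏_i(z - μ_i) with f* = w*·∏(z - μ_i) satisfying f*(μ_i) = δ_i* f*(λ_i) for each i. Then for each i, res_{z=λ_i} w(z)w*(z)dz + res_{z=μ_i} w(z)w*(z)dz = 0. -/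
/-- Residue duality: with the gluing conditions `f(λ_i) = δ_i f(μ_i)` and
`f*(μ_i) = δ_i* f*(λ_i)`, where
`δ_i* = δ_i ∏_{j≠i} ((μ_i-μ_j)(μ_i-λ_j))/((λ_i-μ_j)(λ_i-λ_j))`, the sum of
the residues of `w w* dz` at `λ_i` and `μ_i` vanishes. -/
theorem residue_duality
    (g : ℕ) (hg : 1 ≤ g) (lam mu : Fin g → ℂ) (δ : Fin g → ℂ)
    (hlam0 : ∀ i, lam i ≠ 0) (hmu0 : ∀ i, mu i ≠ 0)
    (h1 : ∀ i j, i ≠ j → lam i ≠ lam j)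
    (h2 : ∀ i j, i ≠ j → mu i ≠ mu j)
    (h3 : ∀ i j, lam i ≠ mu j)
    (hδ : ∀ i, δ i ≠ 0)
    (δs : Fin g → ℂ)
    (hδs : ∀ i, δs i = δ i * ∏ j ∈ Finset.univ.erase i,
      ((mu i - mu j) * (mu i - lam j)) / ((lam i - mu j) * (lam i - lam j)))
    (f fs : ℂ → ℂ)
    (hglue : ∀ i, f (lam i) = δ i * f (mu i))
    (hglue' : ∀ i, fs (mu i) = δs i * fs (lam i)) :
    ∀ i : Fin g,
      f (lam i) * fs (lam i) /
          ((∏ j ∈ Finset.univ.erase i, (lam i - lam j)) * ∏ j, (lam i - mu j))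
        + f (mu i) * fs (mu i) /
          ((∏ j, (mu i - lam j)) * ∏ j ∈ Finset.univ.erase i, (mu i - mu j))
        = 0 := by
  intro i
  set A := ∏ j ∈ Finset.univ.erase i, (lam i - lam j) with hA
  set P2 := ∏ j ∈ Finset.univ.erase i, (lam i - mu j) with hP2
  set P3 := ∏ j ∈ Finset.univ.erase i, (mu i - lam j) with hP3
  set D := ∏ j ∈ Finset.univ.erase i, (mu i - mu j) with hD
  have hAne : A ≠ 0 := Finset.prod_ne_zero_iff.2 fun j hj =>
    sub_ne_zero.2 (h1 i j (Finset.ne_of_mem_erase hj).symm)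
  have hP2ne : P2 ≠ 0 := Finset.prod_ne_zero_iff.2 fun j hj =>
    sub_ne_zero.2 (h3 i j)
  have hP3ne : P3 ≠ 0 := Finset.prod_ne_zero_iff.2 fun j hj =>
    sub_ne_zero.2 fun h => h3 j i h.symm
  have hDne : D ≠ 0 := Finset.prod_ne_zero_iff.2 fun j hj =>
    sub_ne_zero.2 (h2 i j (Finset.ne_of_mem_erase hj).symm)
  have hlm : lam i - mu i ≠ 0 := sub_ne_zero.2 (h3 i i)
  have hml : mu i - lam i ≠ 0 := sub_ne_zero.2 fun h => h3 i i h.symm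
  -- split off the i-th factor from the full products
  have hB : (∏ j, (lam i - mu j)) = (lam i - mu i) * P2 :=
    (Finset.mul_prod_erase Finset.univ (fun j => lam i - mu j) (Finset.mem_univ i)).symm
  have hC : (∏ j, (mu i - lam j)) = (mu i - lam i) * P3 :=
    (Finset.mul_prod_erase Finset.univ (fun j => mu i - lam j) (Finset.mem_univ i)).symm
  -- rewrite δs as a quotient of products
  have hδsi : δs i = δ i * (D * P3) / (P2 * A) := by
    rw [hδs i]
    rw [show (∏ j ∈ Finset.univ.erase i,
        ((mu i - mu j) * (mu i - lam j)) / ((lam i - mu j) * (lam i - lam j)))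
        = (∏ j ∈ Finset.univ.erase i, (mu i - mu j) * (mu i - lam j)) /
          (∏ j ∈ Finset.univ.erase i, (lam i - mu j) * (lam i - lam j)) from
      Finset.prod_div_distrib _ _, Finset.prod_mul_distrib, Finset.prod_mul_distrib]
    field_simp
    rw [← hD, ← hP3, ← hP2, ← hA, mul_assoc _ P2 A, mul_div_assoc,
      div_self (mul_ne_zero hP2ne hAne), mul_one]
  rw [hglue i, hglue' i, hδsi, hB, hC]
  field_simp
  ring
end

section
/- Define for the special case a = q^{3/2}, d = q^{1/2} the function ψ_γ = q^γ/((1 - b q^{γ+1/2})(1 - c q^{γ+1/2})) · ( μ + q^γ/((1 - q^{γ+1})(1 - bc q^γ)) ), with μ ∈ ℂ a parameter. Then under the involution t = q^γ ↦ 1/(bc q^{2} t) one has ψ(1/(bc q^2 t)) = ψ(q t), i.e., I(ψ_γ) = ψ_{γ+1} as rational functions of t. -/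
/-- For `a = q^{3/2}`, `d = q^{1/2}`, the function
`ψ(t) = t/((1-b√q t)(1-c√q t)) · (μ + t/((1-qt)(1-bc t)))` satisfies
`ψ(1/(bc q² t)) = ψ(q t)`, i.e. `I(ψ_γ) = ψ_{γ+1}`. -/
theorem psi_gamma_shift_invariance
    (q : ℝ) (hq : 0 < q) (hq1 : q < 1)
    (b c : ℂ) (hb : b ≠ 0) (hc : c ≠ 0) (μ : ℂ)
    (ψ : ℂ → ℂ)
    (hψ : ∀ t : ℂ, ψ t =
      t / ((1 - b * (Real.sqrt q : ℂ) * t) * (1 - c * (Real.sqrt q : ℂ) * t)) *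
        (μ + t / ((1 - (q:ℂ) * t) * (1 - b * c * t)))) :
    ∀ t : ℂ, t ≠ 0 →
      (1 - b * (Real.sqrt q : ℂ) * ((q:ℂ)*t)) *
        (1 - c * (Real.sqrt q : ℂ) * ((q:ℂ)*t)) ≠ 0 →
      (1 - (q:ℂ) * ((q:ℂ)*t)) * (1 - b * c * ((q:ℂ)*t)) ≠ 0 →
      (1 - b * (Real.sqrt q : ℂ) * (1/(b*c*(q:ℂ)^2*t))) *
        (1 - c * (Real.sqrt q : ℂ) * (1/(b*c*(q:ℂ)^2*t))) ≠ 0 →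
      (1 - (q:ℂ) * (1/(b*c*(q:ℂ)^2*t))) * (1 - b * c * (1/(b*c*(q:ℂ)^2*t))) ≠ 0 →
      ψ (1 / (b * c * (q:ℂ)^2 * t)) = ψ ((q:ℂ) * t) := by
  intro t ht h1 h2 h3 h4
  set s : ℂ := (Real.sqrt q : ℂ) with hsdef
  have hs : (q : ℂ) = s * s := by
    rw [hsdef, ← Complex.ofReal_mul, Real.mul_self_sqrt hq.le]
  have hs0 : s ≠ 0 := by
    rw [hsdef]
    simp only [ne_eq, Complex.ofReal_eq_zero]
    positivity
  rw [hψ, hψ, hs]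
  rw [hs] at h1 h2 h3 h4
  have hbct : b * c * (s * s) ^ 2 * t ≠ 0 := by
    exact mul_ne_zero (mul_ne_zero (mul_ne_zero hb hc) (pow_ne_zero 2 (mul_ne_zero hs0 hs0))) ht
  have hA : (1 / (b * c * (s*s)^2 * t)) /
      ((1 - b * s * (1 / (b * c * (s*s)^2 * t))) * (1 - c * s * (1 / (b * c * (s*s)^2 * t)))) =
      ((s*s) * t) / ((1 - b * s * ((s*s) * t)) * (1 - c * s * ((s*s) * t))) := by
    rw [div_eq_div_iff h3 h1]
    field_simp
    ring
  have hB : (1 / (b * c * (s*s)^2 * t)) /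
      ((1 - (s*s) * (1 / (b * c * (s*s)^2 * t))) * (1 - b * c * (1 / (b * c * (s*s)^2 * t)))) =
      ((s*s) * t) / ((1 - (s*s) * ((s*s) * t)) * (1 - b * c * ((s*s) * t))) := by
    rw [div_eq_div_iff h4 h2]
    field_simp
    ring
  rw [hA, hB]
end
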